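/- arXiv:1103.0229 — 2 statements merged into one kernel-verified Lean document; each statement's English description precedes it below -/
import Mathlib

section
/- Let (a_{n,m}) be a doubly indexed sequence of extended real numbers. Then there exists a function m : ℕ → ℕ with m(n) → ∞ as n → ∞ such that liminf_{n→∞} a_{n,m(n)} ≥ liminf_{m→∞} (liminf_{n→∞} a_{n,m}). -/
open Filter

/-- **A diagonal lemma.** For a doubly indexed sequence of extended reals there is a
diagonal subsequence `n ↦ m n` with `m n → ∞` along which the liminf dominates the
iterated liminf. -/
theorem diagonal_liminf (a : ℕ → ℕ → EReal) :
    ∃ m : ℕ → ℕ, Tendsto m atTop atTop ∧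
      liminf (fun m' => liminf (fun n => a n m') atTop) atTop ≤
        liminf (fun n => a n (m n)) atTop := by
  set b : ℕ → EReal := fun m' => liminf (fun n => a n m') atTop with hb
  set L : EReal := liminf b atTop with hL
  rcases eq_or_ne L ⊥ with h | h
  · exact ⟨id, tendsto_id, by rw [h]; exact bot_le⟩
  · have hbot : (⊥ : EReal) < L := bot_lt_iff_ne_bot.mpr h
    obtain ⟨c, hcmono, hcmem, hctend⟩ := exists_seq_strictMono_tendsto' hbot
    have hclt : ∀ k, c k < L := fun k => (hcmem k).2
    -- for each k, eventually (in m) c k < b m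
    have h1 : ∀ k, ∃ M, ∀ m ≥ M, c k < b m := fun k =>
      eventually_atTop.mp (eventually_lt_of_lt_liminf (hclt k))
    choose M hM using h1
    set M' : ℕ → ℕ := fun k => max k (M k) with hM'
    have hM'ge : ∀ k, k ≤ M' k := fun k => le_max_left _ _
    have hbM' : ∀ k, c k < b (M' k) := fun k => hM k (M' k) (le_max_right _ _)
    -- for each k, eventually (in n) c k < a n (M' k)
    have h2 : ∀ k, ∃ N, ∀ n ≥ N, c k < a n (M' k) := fun k =>
      eventually_atTop.mp (eventually_lt_of_lt_liminf (hbM' k))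
    choose N₀ hN₀ using h2
    set N : ℕ → ℕ := fun k => Nat.rec (N₀ 0) (fun k ih => max (N₀ (k + 1)) (ih + 1)) k with hN
    have hNge : ∀ k, N₀ k ≤ N k := by
      intro k
      cases k with
      | zero => exact le_rfl
      | succ k => exact le_max_left _ _
    have hNmono : StrictMono N := by
      apply strictMono_nat_of_lt_succ
      intro k
      exact lt_of_lt_of_le (Nat.lt_succ_self _) (le_max_right _ _)
    set K : ℕ → ℕ := fun n => Nat.findGreatest (fun j => N j ≤ n) n with hK
    have hKge : ∀ k n, N k ≤ n → k ≤ K n := fun k n hkn =>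
      Nat.le_findGreatest (le_trans (hNmono.le_apply) hkn) hkn
    have hKspec : ∀ k n, N k ≤ n → N (K n) ≤ n := fun k n hkn =>
      Nat.findGreatest_spec (P := fun j => N j ≤ n) (le_trans hNmono.le_apply hkn) hkn
    refine ⟨fun n => M' (K n), ?_, ?_⟩
    · refine tendsto_atTop_atTop.mpr fun j => ⟨N j, fun n hn => ?_⟩
      exact le_trans (hKge j n hn) (hM'ge _)
    · have h3 : ∀ k, c k ≤ liminf (fun n => a n (M' (K n))) atTop := by
        intro k
        apply le_liminf_of_le (by isBoundedDefault)
        filter_upwards [eventually_ge_atTop (N k)] with n hn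
        have hKn : N (K n) ≤ n := hKspec k n hn
        have : c (K n) < a n (M' (K n)) := hN₀ (K n) n (le_trans (hNge _) hKn)
        exact le_trans (hcmono.monotone (hKge k n hn)) this.le
      exact le_of_tendsto hctend (Eventually.of_forall h3)
end

section
/- Let (a_{n,m}) be a doubly indexed sequence of extended real numbers. Then there exists a function m : ℕ → ℕ with m(n) → ∞ as n → ∞ such that limsup_{n→∞} a_{n,m(n)} ≤ limsup_{m→∞} (limsup_{n→∞} a_{n,m}). -/
open Filter

/-- **A diagonal lemma.** For a doubly indexed sequence of extended reals there is a
diagonal subsequence `n ↦ m n` with `m n → ∞` along which the limsup is dominated by the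
iterated limsup. -/
theorem diagonal_limsup (a : ℕ → ℕ → EReal) :
    ∃ m : ℕ → ℕ, Tendsto m atTop atTop ∧
      limsup (fun n => a n (m n)) atTop ≤
        limsup (fun m' => limsup (fun n => a n m') atTop) atTop := by
  set b : ℕ → EReal := fun m' => limsup (fun n => a n m') atTop with hb
  set L : EReal := limsup b atTop with hL
  by_cases htop : L = ⊤
  · exact ⟨id, tendsto_id, by rw [htop]; exact le_top⟩
  · have hLlt : L < ⊤ := lt_top_iff_ne_top.2 htop
    obtain ⟨c, hc_anti, hc_mem, hc_tendsto⟩ := exists_seq_strictAnti_tendsto' hLlt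
    -- choose M
    have hM : ∀ k, ∃ m0, k ≤ m0 ∧ b m0 < c k := by
      intro k
      have h1 : L < c k := (hc_mem k).1
      have h2 := eventually_lt_of_limsup_lt h1
      rw [eventually_atTop] at h2
      obtain ⟨i, hi⟩ := h2
      exact ⟨max i k, le_max_right _ _, hi _ (le_max_left _ _)⟩
    choose M hMk hMb using hM
    -- choose N0
    have hN0 : ∀ k, ∃ n0, ∀ n ≥ n0, a n (M k) < c k := by
      intro k
      have h2 := eventually_lt_of_limsup_lt (hMb k)
      rw [eventually_atTop] at h2
      exact h2
    choose N0 hN0spec using hN0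
    set N : ℕ → ℕ := fun k => k + (Finset.range (k + 1)).sup N0 with hN
    have hNk : ∀ k, k ≤ N k := fun k => Nat.le_add_right _ _
    have hNN0 : ∀ k, N0 k ≤ N k := by
      intro k
      calc N0 k ≤ (Finset.range (k + 1)).sup N0 :=
            Finset.le_sup (Finset.mem_range.2 (Nat.lt_succ_self k))
        _ ≤ N k := Nat.le_add_left _ _
    set m : ℕ → ℕ := fun n => M (Nat.findGreatest (fun k => N k ≤ n) n) with hm
    refine ⟨m, ?_, ?_⟩
    · rw [tendsto_atTop]
      intro K
      rw [eventually_atTop]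
      refine ⟨N K, fun n hn => ?_⟩
      have hfg : K ≤ Nat.findGreatest (fun k => N k ≤ n) n :=
        Nat.le_findGreatest (le_trans (hNk K) hn) hn
      exact le_trans hfg (le_trans (hMk _) le_rfl)
    · -- limsup bound
      have key : ∀ k, limsup (fun n => a n (m n)) atTop ≤ c k := by
        intro k
        apply limsup_le_of_le (by isBoundedDefault)
        rw [eventually_atTop]
        refine ⟨N (k + 1), fun n hn => ?_⟩
        set j := Nat.findGreatest (fun k => N k ≤ n) n with hj
        have hjk : k + 1 ≤ j := Nat.le_findGreatest (le_trans (hNk _) hn) hn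
        have hPj : N j ≤ n := Nat.findGreatest_spec (P := fun k => N k ≤ n) (m := k + 1) (le_trans (hNk _) hn) hn
        have h1 : a n (M j) < c j := hN0spec j n (le_trans (hNN0 j) hPj)
        have h2 : c j ≤ c k := hc_anti.antitone (le_trans (Nat.le_succ k) hjk)
        exact le_of_lt (lt_of_lt_of_le h1 h2)
      exact ge_of_tendsto' hc_tendsto key
end
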